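/- For a symmetric positive semidefinite real N×N matrix K and α > 0, the effective dimension Tr(K(K+αI)^{-1}) satisfies Tr(K(K+αI)^{-1}) ≤ log det(I + α^{-1}K). -/

import Mathlib

/-!
Both sides are spectral functions of `K`: with `λ` running over the eigenvalues of `K`, the trace
is `∑ λ / (λ + α)` and the determinant is `∏ (1 + λ / α)`. Termwise, with `y = 1 + λ / α > 0`,
`λ / (λ + α) = 1 - y⁻¹ ≤ log y`.
-/

namespace Matrix.IsHermitian

variable {𝕜 n : Type*} [RCLike 𝕜] [Fintype n] [DecidableEq n] {A : Matrix n n 𝕜}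

lemma trace_cfc (hA : A.IsHermitian) (f : ℝ → ℝ) :
    (cfc f A).trace = ∑ i, (f (hA.eigenvalues i) : 𝕜) := by
  rw [hA.cfc_eq, IsHermitian.cfc, Unitary.conjStarAlgAut_apply, trace_mul_cycle,
    Unitary.coe_star_mul_self, one_mul, trace_diagonal]
  rfl

lemma det_cfc (hA : A.IsHermitian) (f : ℝ → ℝ) :
    (cfc f A).det = ∏ i, (f (hA.eigenvalues i) : 𝕜) := by
  simp [hA.cfc_eq, IsHermitian.cfc, -Unitary.conjStarAlgAut_apply]

lemma mul_inv_add_smul_one_eq_cfc (hA : A.IsHermitian) {α : ℝ}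
    (hα : ∀ i, hA.eigenvalues i + α ≠ 0) :
    A * (A + α • (1 : Matrix n n 𝕜))⁻¹ = cfc (fun x => x / (x + α)) A := by
  have hspec : ∀ x ∈ spectrum ℝ A, x + α ≠ 0 := by
    rw [hA.spectrum_real_eq_range_eigenvalues]
    exact Set.forall_mem_range.2 hα
  rw [cfc_map_div _ _ A hspec, cfc_add_const α (fun x => x) A, cfc_id' ℝ A,
    Algebra.algebraMap_eq_smul_one, nonsing_inv_eq_ringInverse]

lemma one_add_smul_eq_cfc (hA : A.IsHermitian) (c : ℝ) :
    1 + c • A = cfc (fun x => 1 + c * x) A := by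
  rw [cfc_const_add 1 (c * ·) A, cfc_const_mul_id c A, Algebra.algebraMap_eq_smul_one, one_smul]

end Matrix.IsHermitian

lemma Real.div_add_le_log_one_add_inv_mul {x α : ℝ} (hα : 0 < α) (hx : -α < x) :
    x / (x + α) ≤ Real.log (1 + α⁻¹ * x) := by
  have hxα : 0 < x + α := by linarith
  calc x / (x + α) = 1 - ((x + α) / α)⁻¹ := by field_simp; ring
    _ ≤ Real.log ((x + α) / α) := Real.one_sub_inv_le_log_of_pos (div_pos hxα hα)
    _ = Real.log (1 + α⁻¹ * x) := by congr 1; field_simp; ring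

theorem effective_dim_le_logdet {N : ℕ} (K : Matrix (Fin N) (Fin N) ℝ)
    (hK : K.PosSemidef) (α : ℝ) (hα : 0 < α) :
    (K * (K + α • (1 : Matrix (Fin N) (Fin N) ℝ))⁻¹).trace ≤
      Real.log ((1 + α⁻¹ • K).det) := by
  have hH := hK.isHermitian
  have heig := hK.eigenvalues_nonneg
  rw [hH.mul_inv_add_smul_one_eq_cfc fun i => by linarith [heig i], hH.one_add_smul_eq_cfc,
    hH.trace_cfc, hH.det_cfc]
  simp only [RCLike.ofReal_real_eq_id, id]
  rw [Real.log_prod fun i _ => by have := heig i; positivity]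
  gcongr with i
  exact Real.div_add_le_log_one_add_inv_mul hα (by linarith [heig i])
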